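/- arXiv:0706.3679 — 2 statements merged into one kernel-verified Lean document; each statement's English description precedes it below -/
import Mathlib

section
/- Let G be a class of functions from a domain X into ℝ^Q (3 ≤ Q < ∞). For every γ ∈ (0,1] and every positive integer m such that 2m ≥ d, where d = N-dim(Δ_γ G, γ/24) is the Natarajan dimension with margin γ/24 of the class Δ_γ G = π_γ ∘ Δ (G), the following bound holds: N^{(p)}_{∞,∞}(γ/4, Δ*_γ G, 2m) < 2 · (288 · m · Q² · (Q−1))^{⌈ d · log₂( 23 e m Q (Q−1) / d ) ⌉}, where Δ*_γ G = π_γ ∘ Δ* (G). -/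
open Finset

/-- `max_{l ≠ k} v l` : the maximum of the other components. -/
noncomputable def maxOther {Q : ℕ} (v : Fin Q → ℝ) (k : Fin Q) : ℝ :=
  if h : (Finset.univ.erase k).Nonempty then (Finset.univ.erase k).sup' h v else 0

/-- The margin operator `Δ` (acting componentwise on a vector of outputs). -/
noncomputable def deltaVec {Q : ℕ} (v : Fin Q → ℝ) : Fin Q → ℝ :=
  fun k => (v k - maxOther v k) / 2

/-- The margin operator `Δ*`. -/
noncomputable def deltaStarVec {Q : ℕ} (v : Fin Q → ℝ) : Fin Q → ℝ :=
  fun k => Real.sign (deltaVec v k) *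
    (if h : (Finset.univ : Finset (Fin Q)).Nonempty then
      Finset.univ.sup' h (deltaVec v) else 0)

/-- The squashing operator `π_γ`. -/
noncomputable def trunc {Q : ℕ} (γ : ℝ) (v : Fin Q → ℝ) : Fin Q → ℝ :=
  fun k => Real.sign (v k) * min |v k| γ

/-- The pseudo-metric `d_{ℓ∞, ℓ∞(s)}` induced by a finite subset `s` of the domain. -/
noncomputable def dLinf {X : Type*} {Q : ℕ} (s : Finset X) (f g : X → Fin Q → ℝ) : ℝ :=
  if h : s.Nonempty then s.sup' h (fun x => ‖f x - g x‖) else 0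

/-- The proper covering number `N^{(p)}(ε, F, d)` (∞ if no finite proper ε-net exists). -/
noncomputable def properCov {α : Type*} (ε : ℝ) (F : Set α) (d : α → α → ℝ) : ℕ∞ :=
  sInf {n : ℕ∞ | ∃ N : Finset α, ↑N ⊆ F ∧ (∀ f ∈ F, ∃ c ∈ N, d f c < ε) ∧ n = N.card}

/-- `N^{(p)}_{∞,∞}(ε, F, n)`. -/
noncomputable def covNum {X : Type*} {Q : ℕ} (ε : ℝ) (F : Set (X → Fin Q → ℝ)) (n : ℕ) : ℕ∞ :=
  ⨆ s ∈ {s : Finset X | s.card = n}, properCov ε F (dLinf s)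

/-- `γ`-N-shattering of a finite set by a class of `ℝ^Q`-valued functions. -/
def NShatters {X : Type*} {Q : ℕ} (γ : ℝ) (F : Set (X → Fin Q → ℝ)) (s : Finset X) : Prop :=
  ∃ (i₁ i₂ : X → Fin Q) (b : X → ℝ),
    (∀ x ∈ s, i₁ x ≠ i₂ x) ∧
    ∀ y : X → Bool, ∃ f ∈ F, ∀ x ∈ s,
      (y x = true → f x (i₁ x) - b x ≥ γ) ∧ (y x = false → f x (i₂ x) + b x ≥ γ)

/-- The Natarajan dimension with margin `γ`. -/
noncomputable def NdimMargin {X : Type*} {Q : ℕ} (γ : ℝ) (F : Set (X → Fin Q → ℝ)) : ℕ∞ :=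
  ⨆ s ∈ {s : Finset X | NShatters γ F s}, (s.card : ℕ∞)

/-!
For `v ∈ ℝ^Q`, `Δv` equals the half-gap `M` between the two largest coordinates at the top class
and is at most `-M` elsewhere, so `π_γ Δ* v` is `min(M, γ)` at the top class and `-min(M, γ)`
elsewhere. Record for every output its top class, runner-up and level `⌊8 min(M, γ) / γ⌋ ≤ 8`.
Outputs whose records are not strongly distinct are `γ/4`-close after `π_γ Δ*`, so a maximal
family of functions that are pairwise strongly distinct somewhere on the sample is a proper
`γ/4`-net. Its size is bounded as in Alon, Ben-David, Cesa-Bianchi and Haussler: strong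
distinctness is witnessed by a label (point, level, two classes) splitting the pair into a high
and a low side; a family of size `2 (2L)^k` separated by `L` labels shatters `2^(k+1)` sets of
labels; a shattered set is `γ/24`-N-shattered by `Δ_γ G` at its points, so has at most `d`
elements; and there are at most `∑_{i ≤ d} C(L, i) ≤ (e L / d)^d` such sets.
-/

section PatternShattering

open scoped Classical

variable {Λ β : Type*} {hi lo : Λ → β → Prop} {𝒢 𝒢' : Finset β} {A Lab : Finset Λ} {l : Λ}

variable (hi lo) in
def SeparatedBy (Lab : Finset Λ) (g g' : β) : Prop :=
  ∃ q ∈ Lab, hi q g ∧ lo q g' ∨ hi q g' ∧ lo q g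

/-- If every label had a side smaller than `M`, discarding these sides would remove at most
`#Lab * (M - 1)` members, and two survivors would be separated by a label whose smaller side
contains one of them. -/
lemma exists_mem_le_card_filter_hi_lo (h𝒢 : (𝒢 : Set β).Pairwise (SeparatedBy hi lo Lab))
    {M : ℕ} (hcard : #Lab * (M - 1) + 2 ≤ #𝒢) :
    ∃ l ∈ Lab, M ≤ #(𝒢.filter (hi l)) ∧ M ≤ #(𝒢.filter (lo l)) := by
  by_contra! hsmall
  let small (l : Λ) := if #(𝒢.filter (hi l)) < M then 𝒢.filter (hi l) else 𝒢.filter (lo l)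
  have hU : #(Lab.biUnion small) ≤ #Lab * (M - 1) := by
    refine card_biUnion_le_card_mul _ _ _ fun l hl => ?_
    unfold small
    split_ifs with h
    · omega
    · have := hsmall l hl (not_lt.1 h); omega
  obtain ⟨g, hg, g', hg', hne⟩ := one_lt_card.1 <|
    (show 1 < #𝒢 - #(Lab.biUnion small) by omega).trans_le (le_card_sdiff _ _)
  rw [mem_sdiff] at hg hg'
  have hside : ∀ l ∈ Lab, ∀ a ∈ 𝒢, ∀ b ∈ 𝒢, hi l a → lo l b →
      a ∈ Lab.biUnion small ∨ b ∈ Lab.biUnion small := by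
    intro l hl a ha b hb hla hlb
    by_cases h : #(𝒢.filter (hi l)) < M
    · exact Or.inl (mem_biUnion.2 ⟨l, hl, by simp [small, h, ha, hla]⟩)
    · exact Or.inr (mem_biUnion.2 ⟨l, hl, by simp [small, h, hb, hlb]⟩)
  obtain ⟨l, hl, ⟨hla, hlb⟩ | ⟨hla, hlb⟩⟩ := h𝒢 hg.1 hg'.1 hne
  · rcases hside l hl g hg.1 g' hg'.1 hla hlb with h | h
    exacts [hg.2 h, hg'.2 h]
  · rcases hside l hl g' hg'.1 g hg.1 hla hlb with h | h
    exacts [hg'.2 h, hg.2 h]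

variable [DecidableEq Λ]

variable (hi lo) in
def PatternShatters (𝒢 : Finset β) (A : Finset Λ) : Prop :=
  ∀ S ⊆ A, ∃ g ∈ 𝒢, (∀ q ∈ S, hi q g) ∧ ∀ q ∈ A \ S, lo q g

variable (hi lo) in
noncomputable def shatteredPatterns (Lab : Finset Λ) (𝒢 : Finset β) : Finset (Finset Λ) :=
  Lab.powerset.filter (PatternShatters hi lo 𝒢)

lemma mem_shatteredPatterns :
    A ∈ shatteredPatterns hi lo Lab 𝒢 ↔ A ⊆ Lab ∧ PatternShatters hi lo 𝒢 A := by
  rw [shatteredPatterns, mem_filter, mem_powerset]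

lemma PatternShatters.mono (h : 𝒢 ⊆ 𝒢') (hA : PatternShatters hi lo 𝒢 A) :
    PatternShatters hi lo 𝒢' A := fun S hS =>
  let ⟨g, hg, hgS⟩ := hA S hS; ⟨g, h hg, hgS⟩

lemma patternShatters_empty (h : 𝒢.Nonempty) : PatternShatters hi lo 𝒢 ∅ := fun S hS =>
  let ⟨g, hg⟩ := h; ⟨g, hg, by simp [subset_empty.1 hS]⟩

lemma PatternShatters.exists_hi (hA : PatternShatters hi lo 𝒢 A) (hl : l ∈ A) :
    ∃ g ∈ 𝒢, hi l g :=
  let ⟨g, hg, hgS, _⟩ := hA A subset_rfl; ⟨g, hg, hgS l hl⟩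

lemma PatternShatters.exists_lo (hA : PatternShatters hi lo 𝒢 A) (hl : l ∈ A) :
    ∃ g ∈ 𝒢, lo l g :=
  let ⟨g, hg, _, hgA⟩ := hA (A.erase l) (erase_subset l A)
  ⟨g, hg, hgA l (by simp [hl])⟩

lemma PatternShatters.insert (hl : l ∉ A) (hH : PatternShatters hi lo (𝒢.filter (hi l)) A)
    (hL : PatternShatters hi lo (𝒢.filter (lo l)) A) : PatternShatters hi lo 𝒢 (insert l A) := by
  intro S hS
  by_cases hlS : l ∈ S
  · obtain ⟨g, hg, hgS, hgA⟩ := hH (S.erase l) fun q hq => by grind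
    rw [mem_filter] at hg
    refine ⟨g, hg.1, fun q hq => ?_, fun q hq => hgA q (by grind)⟩
    rcases eq_or_ne q l with rfl | hql
    · exact hg.2
    · exact hgS q (mem_erase.2 ⟨hql, hq⟩)
  · obtain ⟨g, hg, hgS, hgA⟩ := hL S fun q hq => by grind
    rw [mem_filter] at hg
    refine ⟨g, hg.1, hgS, fun q hq => ?_⟩
    rcases eq_or_ne q l with rfl | hql
    · exact hg.2
    · exact hgA q (by grind)

/-- Two labels of a shattered pattern at the same point would be crossed. -/
lemma PatternShatters.injOn {P : Type*} {pt : Λ → P} (hA : PatternShatters hi lo 𝒢 A)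
    (hcross : ∀ q q' g g', pt q = pt q' → hi q g → lo q' g → lo q g' → hi q' g' → False) :
    Set.InjOn pt A := by
  intro q hq q' hq' hpt
  by_contra hne
  obtain ⟨g, -, hg, hg'⟩ := hA {q} (singleton_subset_iff.2 hq)
  obtain ⟨g', -, hh', hh⟩ := hA {q'} (singleton_subset_iff.2 hq')
  exact hcross q q' g g' hpt (hg q (mem_singleton_self q))
    (hg' q' (mem_sdiff.2 ⟨hq', by simpa using Ne.symm hne⟩))
    (hh q (mem_sdiff.2 ⟨hq, by simpa using hne⟩)) (hh' q' (mem_singleton_self q'))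

/-- Every pattern shattered by one of the two halves avoids `l`; the patterns shattered by both,
enlarged by `l`, are shattered by `𝒢` and new. -/
lemma card_shatteredPatterns_filter_add_le (hexcl : ∀ q g, hi q g → lo q g → False)
    (hl : l ∈ Lab) :
    #(shatteredPatterns hi lo Lab (𝒢.filter (hi l))) +
        #(shatteredPatterns hi lo Lab (𝒢.filter (lo l))) ≤ #(shatteredPatterns hi lo Lab 𝒢) := by
  set 𝒮H := shatteredPatterns hi lo Lab (𝒢.filter (hi l))
  set 𝒮L := shatteredPatterns hi lo Lab (𝒢.filter (lo l))
  have hfree : ∀ A ∈ 𝒮H ∪ 𝒮L, l ∉ A := by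
    intro A hA hlA
    rcases mem_union.1 hA with hA | hA
    · obtain ⟨g, hg, hlo⟩ := (mem_shatteredPatterns.1 hA).2.exists_lo hlA
      exact hexcl l g (mem_filter.1 hg).2 hlo
    · obtain ⟨g, hg, hhi⟩ := (mem_shatteredPatterns.1 hA).2.exists_hi hlA
      exact hexcl l g hhi (mem_filter.1 hg).2
  have hold : 𝒮H ∪ 𝒮L ⊆ shatteredPatterns hi lo Lab 𝒢 := by
    intro A hA
    rcases mem_union.1 hA with hA | hA <;> rw [mem_shatteredPatterns] at hA ⊢ <;>
      exact ⟨hA.1, hA.2.mono (filter_subset _ _)⟩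
  have hnew : (𝒮H ∩ 𝒮L).image (insert l) ⊆ shatteredPatterns hi lo Lab 𝒢 := by
    intro A' hA'
    obtain ⟨A, hA, rfl⟩ := mem_image.1 hA'
    have hlA := hfree A (mem_union_left _ (mem_of_mem_inter_left hA))
    rw [mem_inter, mem_shatteredPatterns, mem_shatteredPatterns] at hA
    exact mem_shatteredPatterns.2 ⟨insert_subset hl hA.1.1, .insert hlA hA.1.2 hA.2.2⟩
  have hdisj : Disjoint (𝒮H ∪ 𝒮L) ((𝒮H ∩ 𝒮L).image (insert l)) := by
    refine disjoint_right.2 fun A' hA' hold' => ?_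
    obtain ⟨A, -, rfl⟩ := mem_image.1 hA'
    exact hfree _ hold' (mem_insert_self l A)
  have hinj : #((𝒮H ∩ 𝒮L).image (insert l)) = #(𝒮H ∩ 𝒮L) := by
    refine card_image_of_injOn fun A hA B hB hAB => ?_
    have hlA := hfree A (mem_union_left _ (mem_of_mem_inter_left hA))
    have hlB := hfree B (mem_union_left _ (mem_of_mem_inter_left hB))
    rw [← erase_insert hlA, ← erase_insert hlB]
    exact congrArg (·.erase l) hAB
  calc #𝒮H + #𝒮L = #(𝒮H ∪ 𝒮L) + #(𝒮H ∩ 𝒮L) := (card_union_add_card_inter _ _).symm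
    _ = #((𝒮H ∪ 𝒮L) ∪ (𝒮H ∩ 𝒮L).image (insert l)) := by
      rw [card_union_of_disjoint hdisj, hinj]
    _ ≤ _ := card_le_card (union_subset hold hnew)

theorem two_pow_le_card_shatteredPatterns (hexcl : ∀ q g, hi q g → lo q g → False)
    (hLab : Lab.Nonempty) (k : ℕ) (h𝒢 : (𝒢 : Set β).Pairwise (SeparatedBy hi lo Lab))
    (hcard : 2 * (2 * #Lab) ^ k ≤ #𝒢) : 2 ^ (k + 1) ≤ #(shatteredPatterns hi lo Lab 𝒢) := by
  induction k generalizing 𝒢 with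
  | zero =>
    rw [pow_zero, mul_one] at hcard
    obtain ⟨g, hg, g', hg', hne⟩ := one_lt_card.1 (show 1 < #𝒢 by omega)
    obtain ⟨q, hq, hsep⟩ := h𝒢 hg hg' hne
    have hsides : (𝒢.filter (hi q)).Nonempty ∧ (𝒢.filter (lo q)).Nonempty := by
      rcases hsep with ⟨h, h'⟩ | ⟨h, h'⟩
      · exact ⟨⟨g, mem_filter.2 ⟨hg, h⟩⟩, ⟨g', mem_filter.2 ⟨hg', h'⟩⟩⟩
      · exact ⟨⟨g', mem_filter.2 ⟨hg', h⟩⟩, ⟨g, mem_filter.2 ⟨hg, h'⟩⟩⟩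
    have hsub : {∅, {q}} ⊆ shatteredPatterns hi lo Lab 𝒢 := by
      refine insert_subset (mem_shatteredPatterns.2 ⟨empty_subset _,
        patternShatters_empty ⟨g, hg⟩⟩) (singleton_subset_iff.2 (mem_shatteredPatterns.2 ?_))
      exact ⟨singleton_subset_iff.2 hq, .insert (notMem_empty q)
        (patternShatters_empty hsides.1) (patternShatters_empty hsides.2)⟩
    simpa using card_le_card hsub
  | succ k ih =>
    have hL := hLab.card_pos
    have hM : 0 < (2 * #Lab) ^ k := by positivity
    obtain ⟨l, hl, hH, hLo⟩ := exists_mem_le_card_filter_hi_lo h𝒢 (M := 2 * (2 * #Lab) ^ k) <| by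
      have : #Lab * (2 * (2 * #Lab) ^ k - 1) ≤ #Lab * (2 * (2 * #Lab) ^ k) :=
        Nat.mul_le_mul_left _ (Nat.sub_le _ _)
      rw [pow_succ] at hcard
      nlinarith
    have ihH := ih (h𝒢.mono (coe_subset.2 (filter_subset _ _))) hH
    have ihL := ih (h𝒢.mono (coe_subset.2 (filter_subset _ _))) hLo
    calc 2 ^ (k + 1 + 1) = 2 ^ (k + 1) + 2 ^ (k + 1) := by ring
      _ ≤ _ := add_le_add ihH ihL
      _ ≤ _ := card_shatteredPatterns_filter_add_le hexcl hl

lemma card_shatteredPatterns_le_sum_choose {d : ℕ}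
    (hd : ∀ A ⊆ Lab, PatternShatters hi lo 𝒢 A → #A ≤ d) :
    #(shatteredPatterns hi lo Lab 𝒢) ≤ ∑ i ∈ range (d + 1), (#Lab).choose i := by
  simp_rw [← card_powersetCard]
  refine (card_le_card fun A hA => mem_biUnion.2 ⟨#A, ?_⟩).trans card_biUnion_le
  rw [mem_shatteredPatterns] at hA
  exact ⟨mem_range.2 (Nat.lt_succ_of_le (hd A hA.1 hA.2)), mem_powersetCard.2 ⟨hA.1, rfl⟩⟩

end PatternShattering

lemma properCov_le_card {α : Type*} {ε : ℝ} {F : Set α} {dist : α → α → ℝ} (N : Finset α)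
    (hNF : ↑N ⊆ F) (hN : ∀ f ∈ F, ∃ c ∈ N, dist f c < ε) : properCov ε F dist ≤ #N :=
  sInf_le ⟨N, hNF, hN, rfl⟩

open scoped Classical in
/-- A maximal `sep`-separated subfamily of `G` is a proper net. -/
lemma properCov_image_le_of_pairwise_card_le {α β : Type*} (φ : β → α) (G : Set β)
    (dist : α → α → ℝ) {ε : ℝ} (sep : β → β → Prop) (hsymm : ∀ g g', sep g g' → sep g' g)
    (hirrefl : ∀ g, ¬ sep g g) (hclose : ∀ g ∈ G, ∀ g' ∈ G, ¬ sep g g' → dist (φ g) (φ g') < ε)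
    (N : ℕ) (hpack : ∀ 𝒢 : Finset β, ↑𝒢 ⊆ G → (𝒢 : Set β).Pairwise sep → #𝒢 ≤ N) :
    properCov ε (φ '' G) dist ≤ N := by
  let Packing (n : ℕ) := ∃ 𝒢 : Finset β, ↑𝒢 ⊆ G ∧ (𝒢 : Set β).Pairwise sep ∧ #𝒢 = n
  obtain ⟨𝒢, h𝒢G, h𝒢, hcard⟩ : Packing (Nat.findGreatest Packing N) :=
    Nat.findGreatest_spec (Nat.zero_le N) ⟨∅, by simp, by simp, rfl⟩
  have hmax : ∀ g ∈ G, ∃ p ∈ 𝒢, ¬ sep g p := by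
    intro g hg
    by_contra! hfar
    have hg𝒢 : g ∉ 𝒢 := fun h => hirrefl g (hfar g h)
    have hsub : ↑(insert g 𝒢) ⊆ G := by rw [coe_insert]; exact Set.insert_subset hg h𝒢G
    have hsep : (↑(insert g 𝒢) : Set β).Pairwise sep := by
      rw [coe_insert]; exact h𝒢.insert fun p hp _ => ⟨hfar p hp, hsymm _ _ (hfar p hp)⟩
    have := Nat.le_findGreatest (P := Packing) (hpack _ hsub hsep) ⟨_, hsub, hsep, rfl⟩
    rw [card_insert_of_notMem hg𝒢] at this
    omega
  refine (properCov_le_card (𝒢.image φ) ?_ ?_).trans (Nat.cast_le.2 ?_)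
  · rw [coe_image]; exact Set.image_mono h𝒢G
  · rintro _ ⟨g, hg, rfl⟩
    obtain ⟨p, hp, hgp⟩ := hmax g hg
    exact ⟨φ p, mem_image_of_mem φ hp, hclose g hg p (h𝒢G hp) hgp⟩
  · exact card_image_le.trans (hcard ▸ Nat.findGreatest_le N)

lemma sum_range_choose_le_exp_mul_div_pow {n d : ℕ} (hd : 0 < d) (hdn : d ≤ n) :
    (∑ i ∈ range (d + 1), n.choose i : ℝ) ≤ (Real.exp 1 * n / d) ^ d := by
  have hd' : (0 : ℝ) < d := by exact_mod_cast hd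
  have hn : (0 : ℝ) < n := by exact_mod_cast hd.trans_le hdn
  set α : ℝ := d / n
  have hα : 0 < α := div_pos hd' hn
  have hα1 : α ≤ 1 := (div_le_one hn).2 (by exact_mod_cast hdn)
  have key : (∑ i ∈ range (d + 1), (n.choose i : ℝ)) * α ^ d ≤ Real.exp 1 ^ d :=
    calc (∑ i ∈ range (d + 1), (n.choose i : ℝ)) * α ^ d
        = ∑ i ∈ range (d + 1), (n.choose i : ℝ) * α ^ d := sum_mul _ _ _
      _ ≤ ∑ i ∈ range (d + 1), (n.choose i : ℝ) * α ^ i :=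
        sum_le_sum fun i hi => mul_le_mul_of_nonneg_left
          (pow_le_pow_of_le_one hα.le hα1 (Nat.lt_succ_iff.1 (mem_range.1 hi))) (Nat.cast_nonneg _)
      _ ≤ ∑ i ∈ range (n + 1), (n.choose i : ℝ) * α ^ i :=
        sum_le_sum_of_subset_of_nonneg (range_subset_range.2 (by omega))
          fun _ _ _ => by positivity
      _ = (1 + α) ^ n := by
        rw [add_comm (1 : ℝ), add_pow]
        exact sum_congr rfl fun i _ => by rw [one_pow]; ring
      _ ≤ Real.exp d := by
        have := Real.one_sub_div_pow_le_exp_neg (n := n) (t := -d) (by linarith)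
        rwa [neg_div, sub_neg_eq_add, neg_neg] at this
      _ = Real.exp 1 ^ d := by rw [← Real.exp_nat_mul, mul_one]
  rw [← le_div_iff₀ (by positivity)] at key
  refine key.trans_eq ?_
  rw [← div_pow]
  congr 1
  field_simp
  exact (div_mul_cancel₀ _ hn.ne').symm

lemma exists_natCast_eq_ceil_and_pow_le {Z : ℝ} (hZ : 1 ≤ Z) (d : ℕ) :
    ∃ k : ℕ, (k : ℤ) = ⌈(d : ℝ) * Real.logb 2 Z⌉ ∧ Z ^ d ≤ 2 ^ k := by
  have hlog : 0 ≤ (d : ℝ) * Real.logb 2 Z :=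
    mul_nonneg d.cast_nonneg (Real.logb_nonneg one_lt_two hZ)
  refine ⟨⌈(d : ℝ) * Real.logb 2 Z⌉.toNat, Int.toNat_of_nonneg (Int.ceil_nonneg hlog), ?_⟩
  calc Z ^ d = (2 : ℝ) ^ ((d : ℝ) * Real.logb 2 Z) := by
        rw [mul_comm, Real.rpow_mul zero_le_two, Real.rpow_logb zero_lt_two (by norm_num)
          (by linarith), Real.rpow_natCast]
    _ ≤ (2 : ℝ) ^ ((⌈(d : ℝ) * Real.logb 2 Z⌉.toNat : ℕ) : ℝ) := by
        refine Real.rpow_le_rpow_of_exponent_le one_le_two ?_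
        have := Int.toNat_of_nonneg (Int.ceil_nonneg hlog)
        exact (Int.le_ceil _).trans (by exact_mod_cast this.ge)
    _ = _ := Real.rpow_natCast _ _

lemma maxOther_eq_of_forall_le {Q : ℕ} {v : Fin Q → ℝ} {k l : Fin Q} (hlk : l ≠ k)
    (h : ∀ l' ≠ k, v l' ≤ v l) : maxOther v k = v l := by
  have hl : l ∈ univ.erase k := mem_erase.2 ⟨hlk, mem_univ _⟩
  rw [maxOther, dif_pos ⟨l, hl⟩]
  exact le_antisymm (sup'_le _ _ fun l' hl' => h l' (mem_erase.1 hl').1) (le_sup' v hl)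

lemma sign_mul_min_abs_of_nonneg {x γ : ℝ} (hx : 0 ≤ x) (hγ : 0 ≤ γ) :
    Real.sign x * min |x| γ = min x γ := by
  rcases hx.eq_or_lt with rfl | hx
  · simp [hγ]
  · rw [Real.sign_of_pos hx, one_mul, abs_of_pos hx]

lemma sign_mul_min_abs_neg_of_nonneg {x γ : ℝ} (hx : 0 ≤ x) (hγ : 0 ≤ γ) :
    Real.sign (-x) * min |-x| γ = -min x γ := by
  rw [Real.sign_neg, abs_neg, neg_mul, sign_mul_min_abs_of_nonneg hx hγ]

section MarginStructure

variable {Q : ℕ} [NeZero Q]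

noncomputable def topIdx (v : Fin Q → ℝ) : Fin Q :=
  Classical.epsilon fun k => ∀ l, v l ≤ v k

noncomputable def secondIdx (v : Fin Q → ℝ) : Fin Q :=
  Classical.epsilon fun k => k ≠ topIdx v ∧ ∀ l ≠ topIdx v, v l ≤ v k

/-- The quantity `M_x` of the paper: `Δv` takes the value `gap v` at `topIdx v` and is at most
`-gap v` elsewhere. -/
noncomputable def gap (v : Fin Q → ℝ) : ℝ := (v (topIdx v) - v (secondIdx v)) / 2

noncomputable def clippedGap (γ : ℝ) (v : Fin Q → ℝ) : ℝ := min (gap v) γ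

variable {v : Fin Q → ℝ}

lemma le_topIdx (l : Fin Q) : v l ≤ v (topIdx v) :=
  Classical.epsilon_spec (p := fun k => ∀ l, v l ≤ v k) (Finite.exists_max v) l

lemma secondIdx_spec (hQ : 2 ≤ Q) :
    secondIdx v ≠ topIdx v ∧ ∀ l ≠ topIdx v, v l ≤ v (secondIdx v) := by
  have hne : (univ.erase (topIdx v)).Nonempty := by
    rw [← card_pos, card_erase_of_mem (mem_univ _), card_univ, Fintype.card_fin]; omega
  obtain ⟨k, hk, hmax⟩ := (univ.erase (topIdx v)).exists_max_image v hne
  exact Classical.epsilon_spec (p := fun k => k ≠ topIdx v ∧ ∀ l ≠ topIdx v, v l ≤ v k)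
    ⟨k, (mem_erase.1 hk).1, fun l hl => hmax l (mem_erase.2 ⟨hl, mem_univ _⟩)⟩

lemma gap_nonneg : 0 ≤ gap v := by
  unfold gap; linarith [le_topIdx (v := v) (secondIdx v)]

lemma clippedGap_nonneg {γ : ℝ} (hγ : 0 ≤ γ) : 0 ≤ clippedGap γ v := le_min gap_nonneg hγ

lemma deltaVec_topIdx (hQ : 2 ≤ Q) : deltaVec v (topIdx v) = gap v := by
  rw [deltaVec, gap, maxOther_eq_of_forall_le (secondIdx_spec hQ).1 (secondIdx_spec hQ).2]

lemma deltaVec_of_ne_topIdx {k : Fin Q} (hk : k ≠ topIdx v) :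
    deltaVec v k = (v k - v (topIdx v)) / 2 := by
  rw [deltaVec, maxOther_eq_of_forall_le hk.symm fun l _ => le_topIdx l]

lemma deltaVec_le_neg_gap (hQ : 2 ≤ Q) {k : Fin Q} (hk : k ≠ topIdx v) :
    deltaVec v k ≤ -gap v := by
  have := (secondIdx_spec hQ).2 k hk
  rw [deltaVec_of_ne_topIdx hk, gap]; linarith

lemma deltaVec_secondIdx (hQ : 2 ≤ Q) : deltaVec v (secondIdx v) = -gap v := by
  rw [deltaVec_of_ne_topIdx (secondIdx_spec hQ).1, gap]; ring

lemma deltaStarVec_apply (hQ : 2 ≤ Q) (k : Fin Q) :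
    deltaStarVec v k = if k = topIdx v then gap v else -gap v := by
  have hsup : univ.sup' univ_nonempty (deltaVec v) = gap v := by
    refine le_antisymm (sup'_le _ _ fun l _ => ?_) (deltaVec_topIdx hQ ▸ le_sup' _ (mem_univ _))
    rcases eq_or_ne l (topIdx v) with rfl | hl
    · exact (deltaVec_topIdx hQ).le
    · linarith [deltaVec_le_neg_gap hQ hl, gap_nonneg (v := v)]
  rw [deltaStarVec, dif_pos univ_nonempty, hsup]
  split_ifs with hk
  · rcases (gap_nonneg (v := v)).eq_or_lt with h | h
    · rw [← h, mul_zero]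
    · rw [hk, deltaVec_topIdx hQ, Real.sign_of_pos h, one_mul]
  · rcases (gap_nonneg (v := v)).eq_or_lt with h | h
    · rw [← h, mul_zero, neg_zero]
    · rw [Real.sign_of_neg (by linarith [deltaVec_le_neg_gap hQ hk]), neg_one_mul]

lemma trunc_deltaStarVec (hQ : 2 ≤ Q) {γ : ℝ} (hγ : 0 ≤ γ) (k : Fin Q) :
    trunc γ (deltaStarVec v) k = if k = topIdx v then clippedGap γ v else -clippedGap γ v := by
  rw [trunc, deltaStarVec_apply hQ]
  split_ifs
  · exact sign_mul_min_abs_of_nonneg gap_nonneg hγ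
  · exact sign_mul_min_abs_neg_of_nonneg gap_nonneg hγ

lemma abs_trunc_deltaStarVec_le (hQ : 2 ≤ Q) {γ : ℝ} (hγ : 0 ≤ γ) (k : Fin Q) :
    |trunc γ (deltaStarVec v) k| ≤ clippedGap γ v := by
  rw [trunc_deltaStarVec hQ hγ]
  split_ifs <;> simp [abs_of_nonneg (clippedGap_nonneg hγ)]

lemma trunc_deltaVec_topIdx (hQ : 2 ≤ Q) {γ : ℝ} (hγ : 0 ≤ γ) :
    trunc γ (deltaVec v) (topIdx v) = clippedGap γ v := by
  rw [trunc, deltaVec_topIdx hQ]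
  exact sign_mul_min_abs_of_nonneg gap_nonneg hγ

lemma trunc_deltaVec_secondIdx (hQ : 2 ≤ Q) {γ : ℝ} (hγ : 0 ≤ γ) :
    trunc γ (deltaVec v) (secondIdx v) = -clippedGap γ v := by
  rw [trunc, deltaVec_secondIdx hQ]
  exact sign_mul_min_abs_neg_of_nonneg gap_nonneg hγ

end MarginStructure

section Symbols

variable {Q : ℕ} [NeZero Q] {γ : ℝ} {v w : Fin Q → ℝ}

noncomputable def level (γ : ℝ) (v : Fin Q → ℝ) : ℕ := ⌊8 * clippedGap γ v / γ⌋₊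

lemma level_mul_le (hγ : 0 < γ) : (level γ v : ℝ) * γ ≤ 8 * clippedGap γ v := by
  rw [← le_div_iff₀ hγ]
  exact Nat.floor_le (div_nonneg (by linarith [clippedGap_nonneg (v := v) hγ.le]) hγ.le)

lemma lt_level_add_one_mul (hγ : 0 < γ) : 8 * clippedGap γ v < (level γ v + 1) * γ := by
  rw [← div_lt_iff₀ hγ]
  exact Nat.lt_floor_add_one _

lemma level_le_eight (hγ : 0 < γ) : level γ v ≤ 8 := by
  refine Nat.floor_le_of_le ((div_le_iff₀ hγ).2 ?_)
  have : clippedGap γ v ≤ γ := min_le_right _ _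
  push_cast; linarith

def StronglyDistinct (γ : ℝ) (v w : Fin Q → ℝ) : Prop :=
  (topIdx v ≠ topIdx w ∧ (1 ≤ level γ v ∨ 1 ≤ level γ w)) ∨
    (topIdx v = topIdx w ∧ (level γ v + 2 ≤ level γ w ∨ level γ w + 2 ≤ level γ v))

lemma StronglyDistinct.symm (h : StronglyDistinct γ v w) : StronglyDistinct γ w v := by
  unfold StronglyDistinct at *; omega

lemma not_stronglyDistinct_self : ¬ StronglyDistinct γ v v := by
  unfold StronglyDistinct; omega

lemma abs_sub_trunc_deltaStarVec_lt (hQ : 2 ≤ Q) (hγ : 0 < γ) (h : ¬ StronglyDistinct γ v w)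
    (k : Fin Q) : |trunc γ (deltaStarVec v) k - trunc γ (deltaStarVec w) k| < γ / 4 := by
  have hv := level_mul_le hγ (v := v)
  have hv' := lt_level_add_one_mul hγ (v := v)
  have hw := level_mul_le hγ (v := w)
  have hw' := lt_level_add_one_mul hγ (v := w)
  unfold StronglyDistinct at h
  by_cases htop : topIdx v = topIdx w
  · have hlev : (level γ v : ℝ) ≤ level γ w + 1 ∧ (level γ w : ℝ) ≤ level γ v + 1 := by
      constructor <;> exact_mod_cast (by omega)
    rw [trunc_deltaStarVec hQ hγ.le, trunc_deltaStarVec hQ hγ.le, htop]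
    rw [abs_sub_lt_iff]
    split_ifs <;> constructor <;> nlinarith
  · have hv0 : level γ v = 0 := by omega
    have hw0 : level γ w = 0 := by omega
    rw [hv0] at hv'
    rw [hw0] at hw'
    calc _ ≤ |trunc γ (deltaStarVec v) k| + |trunc γ (deltaStarVec w) k| := abs_sub _ _
      _ ≤ clippedGap γ v + clippedGap γ w := add_le_add
          (abs_trunc_deltaStarVec_le hQ hγ.le k) (abs_trunc_deltaStarVec_le hQ hγ.le k)
      _ < γ / 4 := by push_cast at hv' hw'; linarith

end Symbols

section Witnesses

variable {Q : ℕ} [NeZero Q] {γ : ℝ} {v w : Fin Q → ℝ}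

/-- A witness `(t, i₁, i₂)` compares the outputs of `Δ_γ` at the classes `i₁` and `i₂` with the
offset `witnessOffset γ t`. The three kinds of low outputs match the three ways two outputs can be
strongly distinct; the order condition `i₂ < i₁` of the first kind is what rules out crossings
(`not_isHigh_isLow_cross`). -/
abbrev Witness (Q : ℕ) := Fin 9 × Fin Q × Fin Q

def IsHigh (γ : ℝ) (ω : Witness Q) (v : Fin Q → ℝ) : Prop :=
  topIdx v = ω.2.1 ∧ max 1 (ω.1 : ℕ) ≤ level γ v

def IsLow (γ : ℝ) (ω : Witness Q) (v : Fin Q → ℝ) : Prop :=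
  ((ω.1 : ℕ) = 0 ∧ topIdx v = ω.2.2 ∧ 1 ≤ level γ v ∧ ω.2.2 < ω.2.1) ∨
    ((ω.1 : ℕ) = 1 ∧ topIdx v = ω.2.2 ∧ level γ v = 0) ∨
    (2 ≤ (ω.1 : ℕ) ∧ topIdx v = ω.2.1 ∧ secondIdx v = ω.2.2 ∧ level γ v + 2 ≤ ω.1)

noncomputable def witnessOffset (γ : ℝ) (t : Fin 9) : ℝ := (max 1 (t : ℕ) : ℕ) * (γ / 8) - γ / 24

lemma not_isHigh_isLow_cross {ω ω' : Witness Q} (h₁ : IsHigh γ ω v)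
    (h₂ : IsLow γ ω' v) (h₃ : IsLow γ ω w) (h₄ : IsHigh γ ω' w) : False := by
  unfold IsHigh IsLow at *; omega

lemma exists_witness_of_stronglyDistinct (hQ : 2 ≤ Q) (hγ : 0 < γ)
    (h : StronglyDistinct γ v w) : ∃ ω : Witness Q, ω.2.1 ≠ ω.2.2 ∧
      (IsHigh γ ω v ∧ IsLow γ ω w ∨ IsHigh γ ω w ∧ IsLow γ ω v) := by
  have hv := level_le_eight hγ (v := v)
  have hw := level_le_eight hγ (v := w)
  have hsv := (secondIdx_spec hQ (v := v)).1
  have hsw := (secondIdx_spec hQ (v := w)).1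
  unfold StronglyDistinct at h
  unfold IsHigh IsLow
  rcases h with ⟨hne, hlev⟩ | ⟨heq, hlev | hlev⟩
  · rcases Nat.eq_zero_or_pos (level γ v) with hv0 | hv0
    · exact ⟨(1, topIdx w, topIdx v), fun h => hne h.symm, by dsimp only; omega⟩
    rcases Nat.eq_zero_or_pos (level γ w) with hw0 | hw0
    · exact ⟨(1, topIdx v, topIdx w), hne, by dsimp only; omega⟩
    rcases lt_or_gt_of_ne hne with hlt | hlt
    · exact ⟨(0, topIdx w, topIdx v), fun h => hne h.symm, by dsimp only; omega⟩
    · exact ⟨(0, topIdx v, topIdx w), hne, by dsimp only; omega⟩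
  · exact ⟨(⟨level γ w, by omega⟩, topIdx w, secondIdx v), by dsimp only; omega,
      by dsimp only; omega⟩
  · exact ⟨(⟨level γ v, by omega⟩, topIdx v, secondIdx w), by dsimp only; omega,
      by dsimp only; omega⟩

lemma IsHigh.le_trunc_deltaVec_sub_witnessOffset (hQ : 2 ≤ Q) (hγ : 0 < γ) {ω : Witness Q}
    (h : IsHigh γ ω v) : γ / 24 ≤ trunc γ (deltaVec v) ω.2.1 - witnessOffset γ ω.1 := by
  rw [← h.1, trunc_deltaVec_topIdx hQ hγ.le, witnessOffset]
  have hle : ((max 1 (ω.1 : ℕ) : ℕ) : ℝ) ≤ level γ v := by exact_mod_cast h.2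
  nlinarith [level_mul_le hγ (v := v)]

lemma IsLow.le_trunc_deltaVec_add_witnessOffset (hQ : 2 ≤ Q) (hγ : 0 < γ) {ω : Witness Q}
    (h : IsLow γ ω v) : γ / 24 ≤ trunc γ (deltaVec v) ω.2.2 + witnessOffset γ ω.1 := by
  have hc := clippedGap_nonneg hγ.le (v := v)
  rw [witnessOffset]
  rcases h with ⟨ht, htop, -, -⟩ | ⟨ht, htop, -⟩ | ⟨ht, -, hsec, hlev⟩
  · rw [← htop, trunc_deltaVec_topIdx hQ hγ.le, ht]; norm_num; linarith
  · rw [← htop, trunc_deltaVec_topIdx hQ hγ.le, ht]; norm_num; linarith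
  · rw [← hsec, trunc_deltaVec_secondIdx hQ hγ.le, max_eq_right (by omega)]
    have hlev' : (level γ v : ℝ) + 2 ≤ (ω.1 : ℕ) := by exact_mod_cast hlev
    nlinarith [lt_level_add_one_mul hγ (v := v)]

end Witnesses

section WitnessLabels

open scoped Classical

variable {X : Type*} {Q : ℕ}

def witnessLabels (s : Finset X) : Finset (X × Witness Q) :=
  s ×ˢ (univ ×ˢ univ.offDiag)

lemma card_witnessLabels (s : Finset X) :
    #(witnessLabels (Q := Q) s) = #s * (9 * (Q * Q - Q)) := by
  simp [witnessLabels, card_product, offDiag_card]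

variable [NeZero Q] {γ : ℝ}

def HighAt (γ : ℝ) (q : X × Witness Q) (g : X → Fin Q → ℝ) : Prop :=
  IsHigh γ q.2 (g q.1)

def LowAt (γ : ℝ) (q : X × Witness Q) (g : X → Fin Q → ℝ) : Prop :=
  IsLow γ q.2 (g q.1)

lemma highAt_lowAt_cross {q q' : X × Witness Q} {g g' : X → Fin Q → ℝ}
    (hqq' : q.1 = q'.1) (h₁ : HighAt γ q g) (h₂ : LowAt γ q' g) (h₃ : LowAt γ q g')
    (h₄ : HighAt γ q' g') : False := by
  unfold HighAt LowAt at *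
  rw [← hqq'] at h₂ h₄
  exact not_isHigh_isLow_cross h₁ h₂ h₃ h₄

lemma nShatters_image_fst (hQ : 2 ≤ Q) (hγ : 0 < γ) {G : Set (X → Fin Q → ℝ)}
    {𝒢 : Finset (X → Fin Q → ℝ)} (h𝒢G : ↑𝒢 ⊆ G) {s : Finset X} {A : Finset (X × Witness Q)}
    (hA : A ⊆ witnessLabels s) (hsh : PatternShatters (HighAt γ) (LowAt γ) 𝒢 A) :
    NShatters (γ / 24) ((fun g : X → Fin Q → ℝ => trunc γ ∘ deltaVec ∘ g) '' G)
      (A.image Prod.fst) := by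
  have : ∀ x ∈ A.image Prod.fst, ∃ ω, (x, ω) ∈ A := by simp
  choose! wit hwit using this
  refine ⟨fun x => (wit x).2.1, fun x => (wit x).2.2, fun x => witnessOffset γ (wit x).1,
    fun x hx => ?_, fun y => ?_⟩
  · have := hA (hwit x hx)
    simp only [witnessLabels, mem_product, mem_offDiag] at this
    exact this.2.2.2.2
  · obtain ⟨g, hg, hhi, hlo⟩ := hsh (A.filter fun q => y q.1 = true) (filter_subset _ _)
    refine ⟨_, ⟨g, h𝒢G hg, rfl⟩, fun x hx => ⟨fun hy => ?_, fun hy => ?_⟩⟩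
    · exact (hhi _ (mem_filter.2 ⟨hwit x hx, hy⟩)).le_trunc_deltaVec_sub_witnessOffset hQ hγ
    · exact (hlo _ (mem_sdiff.2 ⟨hwit x hx, by simp [hy]⟩)).le_trunc_deltaVec_add_witnessOffset
        hQ hγ

lemma card_le_of_patternShatters (hQ : 2 ≤ Q) (hγ : 0 < γ) {G : Set (X → Fin Q → ℝ)} {d : ℕ}
    (hd : NdimMargin (γ / 24) ((fun g : X → Fin Q → ℝ => trunc γ ∘ deltaVec ∘ g) '' G) = d)
    {𝒢 : Finset (X → Fin Q → ℝ)} (h𝒢G : ↑𝒢 ⊆ G) {s : Finset X}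
    {A : Finset (X × Witness Q)} (hA : A ⊆ witnessLabels s)
    (hsh : PatternShatters (HighAt γ) (LowAt γ) 𝒢 A) : #A ≤ d := by
  have hinj := hsh.injOn (pt := Prod.fst) fun _ _ _ _ => highAt_lowAt_cross
  rw [← card_image_of_injOn hinj, ← ENat.natCast_le_natCast, ← hd]
  exact le_iSup₂_of_le (f := fun t (_ : t ∈ {t | NShatters _ _ t}) => (#t : ℕ∞)) _
    (nShatters_image_fst hQ hγ h𝒢G hA hsh) le_rfl

lemma card_lt_of_pairwise_stronglyDistinct (hQ : 2 ≤ Q) (hγ : 0 < γ) {G : Set (X → Fin Q → ℝ)}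
    {d : ℕ} (hd : NdimMargin (γ / 24) ((fun g : X → Fin Q → ℝ => trunc γ ∘ deltaVec ∘ g) '' G) = d)
    {s : Finset X} (hs : s.Nonempty) {k : ℕ}
    (hk : ∑ i ∈ range (d + 1), (#(witnessLabels (Q := Q) s)).choose i < 2 ^ (k + 1))
    {𝒢 : Finset (X → Fin Q → ℝ)} (h𝒢G : ↑𝒢 ⊆ G)
    (h𝒢 : (𝒢 : Set (X → Fin Q → ℝ)).Pairwise
      fun g g' => ∃ x ∈ s, StronglyDistinct γ (g x) (g' x)) :
    #𝒢 < 2 * (2 * #(witnessLabels (Q := Q) s)) ^ k := by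
  by_contra! hbig
  have hsep : (𝒢 : Set (X → Fin Q → ℝ)).Pairwise
      (SeparatedBy (HighAt γ) (LowAt γ) (witnessLabels s)) := by
    refine h𝒢.imp fun g g' ⟨x, hx, hsd⟩ => ?_
    obtain ⟨ω, hω, hω'⟩ := exists_witness_of_stronglyDistinct hQ hγ hsd
    exact ⟨(x, ω), by simp [witnessLabels, hx, hω], hω'⟩
  have hLab : (witnessLabels (Q := Q) s).Nonempty := by
    obtain ⟨x, hx⟩ := hs
    exact ⟨(x, 0, 0, 1), by simp [witnessLabels, hx]; omega⟩
  have hlow := two_pow_le_card_shatteredPatterns (hi := HighAt γ) (lo := LowAt γ)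
    (fun q g h h' => highAt_lowAt_cross rfl h h' h' h) hLab k hsep hbig
  have hhigh := card_shatteredPatterns_le_sum_choose (hi := HighAt γ) (lo := LowAt γ) (𝒢 := 𝒢)
    (Lab := witnessLabels s) (d := d)
    fun A hA hsh => card_le_of_patternShatters hQ hγ hd h𝒢G hA hsh
  omega

end WitnessLabels

lemma covNum_trunc_deltaStarVec_lt {X : Type*} {Q : ℕ} [NeZero Q] (hQ : 2 ≤ Q) {γ : ℝ}
    (hγ : 0 < γ) {G : Set (X → Fin Q → ℝ)} {d : ℕ}
    (hd : NdimMargin (γ / 24) ((fun g : X → Fin Q → ℝ => trunc γ ∘ deltaVec ∘ g) '' G) = d)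
    {n : ℕ} (hn : 0 < n) {k : ℕ}
    (hk : ∑ i ∈ range (d + 1), (n * (9 * (Q * Q - Q))).choose i < 2 ^ (k + 1)) :
    covNum (γ / 4) ((fun g : X → Fin Q → ℝ => trunc γ ∘ deltaStarVec ∘ g) '' G) n <
      (2 * (2 * (n * (9 * (Q * Q - Q)))) ^ k : ℕ) := by
  have hpos : 0 < 2 * (2 * (n * (9 * (Q * Q - Q)))) ^ k := by
    have := Nat.mul_le_mul_right Q hQ
    exact Nat.mul_pos two_pos (pow_pos (Nat.mul_pos two_pos (Nat.mul_pos hn (by omega))) k)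
  refine lt_of_le_of_lt (iSup₂_le fun s (hs : #s = n) => ?_)
    (Nat.cast_lt.2 (Nat.sub_lt hpos one_pos))
  have hsne : s.Nonempty := card_pos.1 (hs ▸ hn)
  refine properCov_image_le_of_pairwise_card_le _ G _
    (fun g g' => ∃ x ∈ s, StronglyDistinct γ (g x) (g' x))
    (fun _ _ ⟨x, hx, h⟩ => ⟨x, hx, h.symm⟩) (fun _ ⟨_, _, h⟩ => not_stronglyDistinct_self h)
    (fun g _ g' _ hclose => ?_) _ fun 𝒢 h𝒢G h𝒢 => ?_
  · rw [dLinf, dif_pos hsne, sup'_lt_iff]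
    intro x hx
    rw [pi_norm_lt_iff (by positivity)]
    intro k
    push Not at hclose
    exact abs_sub_trunc_deltaStarVec_lt hQ hγ (hclose x hx) k
  · have := card_lt_of_pairwise_stronglyDistinct hQ hγ hd hsne
      (by rwa [card_witnessLabels, hs]) h𝒢G h𝒢
    rw [card_witnessLabels, hs] at this
    exact Nat.le_sub_one_of_lt this

lemma exists_natCast_eq_ceil_and_sum_choose_le {m Q d : ℕ} (hQ : 2 ≤ Q) (hdm : d ≤ 2 * m) :
    ∃ k : ℕ, (k : ℤ) = ⌈(d : ℝ) * Real.logb 2 (23 * Real.exp 1 * m * Q * (Q - 1) / d)⌉ ∧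
      ∑ i ∈ range (d + 1), (2 * m * (9 * (Q * Q - Q))).choose i ≤ 2 ^ k := by
  rcases Nat.eq_zero_or_pos d with rfl | hd
  · exact ⟨0, by simp, by simp⟩
  have hd' : (0 : ℝ) < d := by exact_mod_cast hd
  have hQQ : ((Q * Q - Q : ℕ) : ℝ) = Q * (Q - 1) := by
    rw [Nat.cast_sub (Nat.le_mul_self Q)]; push_cast; ring
  set u : ℝ := m * (Q * (Q - 1))
  have hZu : 23 * Real.exp 1 * m * Q * (Q - 1) / d = 23 * Real.exp 1 * u / d := by ring
  have hdu : (d : ℝ) ≤ u := by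
    have hQ' : (2 : ℝ) ≤ Q * (Q - 1) := by
      have : (2 : ℝ) ≤ Q := by exact_mod_cast hQ
      nlinarith
    have : (d : ℝ) ≤ 2 * m := by exact_mod_cast hdm
    nlinarith [(Nat.cast_nonneg m : (0 : ℝ) ≤ m)]
  have he := Real.add_one_le_exp 1
  have hZ : 1 ≤ 23 * Real.exp 1 * u / d := by
    rw [le_div_iff₀ hd']; nlinarith
  obtain ⟨k, hk, hpow⟩ := exists_natCast_eq_ceil_and_pow_le hZ d
  refine ⟨k, hZu ▸ hk, ?_⟩
  have hdn : d ≤ 2 * m * (9 * (Q * Q - Q)) := by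
    have : (d : ℝ) ≤ ((2 * m * (9 * (Q * Q - Q)) : ℕ) : ℝ) := by
      push_cast [hQQ]; nlinarith
    exact_mod_cast this
  have hbase : Real.exp 1 * ((2 * m * (9 * (Q * Q - Q)) : ℕ) : ℝ) / d ≤
      23 * Real.exp 1 * u / d := by
    rw [div_le_div_iff_of_pos_right hd']
    push_cast [hQQ]
    nlinarith
  exact_mod_cast (sum_range_choose_le_exp_mul_div_pow hd hdn).trans
    ((pow_le_pow_left₀ (by positivity) hbase d).trans hpow)

/-- generalized Sauer lemma bounding the covering numbers of `Δ*_γ G` in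
terms of the Natarajan dimension with margin `γ/24` of `Δ_γ G`. -/
theorem generalized_sauer_lemma
    {X : Type*} (Q : ℕ) (hQ : 3 ≤ Q) (G : Set (X → Fin Q → ℝ))
    (γ : ℝ) (hγ : γ ∈ Set.Ioc (0 : ℝ) 1) (m : ℕ) (hm : 0 < m)
    (d : ℕ)
    (hd : NdimMargin (γ / 24) ((fun g : X → Fin Q → ℝ => trunc γ ∘ deltaVec ∘ g) '' G)
            = (d : ℕ∞))
    (hdm : d ≤ 2 * m) :
    ∃ n : ℕ,
      covNum (γ / 4) ((fun g : X → Fin Q → ℝ => trunc γ ∘ deltaStarVec ∘ g) '' G) (2 * m)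
          = (n : ℕ∞) ∧
      (n : ℝ) < 2 * ((288 * m * Q ^ 2 * (Q - 1) : ℝ)) ^
        (⌈(d : ℝ) * Real.logb 2 (23 * Real.exp 1 * m * Q * (Q - 1) / d)⌉ : ℤ) := by
  have : NeZero Q := ⟨by omega⟩
  obtain ⟨k, hk, hsum⟩ := exists_natCast_eq_ceil_and_sum_choose_le (by omega : 2 ≤ Q) hdm
  have hcov := covNum_trunc_deltaStarVec_lt (G := G) (by omega) hγ.1 hd (by omega : 0 < 2 * m)
    (hsum.trans_lt (Nat.pow_lt_pow_succ one_lt_two))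
  obtain ⟨n, hn⟩ := ENat.ne_top_iff_exists.1 hcov.ne_top
  refine ⟨n, hn.symm, ?_⟩
  rw [← hn, Nat.cast_lt] at hcov
  have hbase : ((2 * (2 * m * (9 * (Q * Q - Q))) : ℕ) : ℝ) ≤ 288 * m * Q ^ 2 * (Q - 1) := by
    have : (3 : ℝ) ≤ Q := by exact_mod_cast hQ
    have hu : (0 : ℝ) ≤ m * (Q * (Q - 1)) := mul_nonneg m.cast_nonneg (by nlinarith)
    push_cast [Nat.cast_sub (Nat.le_mul_self Q)]
    nlinarith [mul_nonneg hu (by linarith : (0 : ℝ) ≤ 288 * Q - 36)]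
  rw [← hk, zpow_natCast]
  calc (n : ℝ) < ((2 * (2 * (2 * m * (9 * (Q * Q - Q)))) ^ k : ℕ) : ℝ) := by exact_mod_cast hcov
    _ ≤ 2 * ((288 * m * Q ^ 2 * (Q - 1) : ℝ)) ^ k := by
      push_cast at hbase ⊢
      gcongr
end

section
/- Let Φ be a map from X into a Hilbert space E whose image Φ(X) is included in the closed ball of radius Λ_Φ about the origin, and let H̄ be the class of functions h : X → ℝ^Q of the form h(x) = ( ⟨w_k, Φ(x)⟩ )_{1≤k≤Q} (b = 0), with w_1,...,w_Q ∈ E satisfying (1/2) · max_{1≤k<l≤Q} ‖w_k − w_l‖ ≤ Λ_w. Then for every ε > 0, the Natarajan dimension with margin ε of Δ H̄ satisfies: N-dim(Δ H̄, ε) ≤ (Q(Q−1)/2) · ( Λ_w Λ_Φ / ε )². -/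
open Finset ENNReal

/-!
Split an `ε`-N-shattered set according to the unordered pair `{i₁ x, i₂ x}` of classes attached
to each point; there are `Q(Q-1)/2` such pairs. On the points attached to `{k, l}`, the margin
operator reduces the shattering condition to a margin-`ε` shattering by the linear functional
`⟪(w_k - w_l)/2, ·⟫`, of norm at most `Λ_w`, of the points `ψ x = ±Φ(x)` (the sign records the
orientation of the pair). Such a set `t` has at most `(Λ_w Λ_Φ / ε)²` points: choose signs `σ`
greedily, via the parallelogram law, so that `S = ∑ σ_x ψ x` has `‖S‖² ≤ |t| Λ_Φ²`; the
functionals realising `σ` and `-σ` differ by some `v` with `‖v‖ ≤ 2Λ_w` and `⟪v, S⟫ ≥ 2ε|t|`.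
-/

open RealInnerProductSpace

def boolSign : Bool → ℝ
  | true => 1
  | false => -1

@[simp]
lemma boolSign_not (y : Bool) : boolSign (!y) = -boolSign y := by
  cases y <;> simp [boolSign]

lemma norm_boolSign_smul {E : Type*} [SeminormedAddCommGroup E] [NormedSpace ℝ E] (y : Bool)
    (v : E) : ‖boolSign y • v‖ = ‖v‖ := by
  cases y <;> simp [boolSign]

section Hilbert

variable {X E : Type*} [NormedAddCommGroup E] [InnerProductSpace ℝ E]

lemma exists_norm_boolSign_smul_add_sq_le (v S : E) :
    ∃ c : Bool, ‖boolSign c • v + S‖ ^ 2 ≤ ‖v‖ ^ 2 + ‖S‖ ^ 2 := by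
  have hpar := parallelogram_law_with_norm ℝ S v
  by_cases h : ‖S + v‖ ^ 2 ≤ ‖v‖ ^ 2 + ‖S‖ ^ 2
  · exact ⟨true, by simpa [boolSign, add_comm] using h⟩
  · refine ⟨false, ?_⟩
    simp only [boolSign, neg_smul, one_smul, neg_add_eq_sub]
    linarith

lemma exists_norm_sum_boolSign_smul_sq_le (t : Finset X) (ψ : X → E) :
    ∃ y : X → Bool, ‖∑ x ∈ t, boolSign (y x) • ψ x‖ ^ 2 ≤ ∑ x ∈ t, ‖ψ x‖ ^ 2 := by
  classical
  induction t using Finset.induction_on with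
  | empty => simp
  | insert a t ha ih =>
    obtain ⟨y, hy⟩ := ih
    obtain ⟨c, hc⟩ := exists_norm_boolSign_smul_add_sq_le (ψ a) (∑ x ∈ t, boolSign (y x) • ψ x)
    refine ⟨Function.update y a c, ?_⟩
    have hrest : ∑ x ∈ t, boolSign (Function.update y a c x) • ψ x =
        ∑ x ∈ t, boolSign (y x) • ψ x :=
      sum_congr rfl fun x hx => by rw [Function.update_of_ne (ne_of_mem_of_not_mem hx ha)]
    rw [sum_insert ha, sum_insert ha, Function.update_self, hrest]
    linarith

variable {t : Finset X} {ψ : X → E} {b : X → ℝ} {ε Λψ Λu : ℝ}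

lemma mul_card_le_mul_norm_sum_of_inner_shatters
    (H : ∀ y : X → Bool, ∃ u : E, ‖u‖ ≤ Λu ∧ ∀ x ∈ t, ε ≤ boolSign (y x) * (⟪u, ψ x⟫ - b x))
    (y : X → Bool) : ε * #t ≤ Λu * ‖∑ x ∈ t, boolSign (y x) • ψ x‖ := by
  obtain ⟨u, hu, hu_sep⟩ := H y
  obtain ⟨u', hu', hu'_sep⟩ := H fun x => !y x
  have hpoint : ∀ x ∈ t, 2 * ε ≤ ⟪u - u', boolSign (y x) • ψ x⟫ := fun x hx => by
    have h := hu_sep x hx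
    have h' := hu'_sep x hx
    rw [boolSign_not] at h'
    rw [real_inner_smul_right, inner_sub_left]
    linarith
  have hsum : 2 * (ε * #t) ≤ 2 * Λu * ‖∑ x ∈ t, boolSign (y x) • ψ x‖ :=
    calc 2 * (ε * #t) = ∑ x ∈ t, 2 * ε := by rw [sum_const, nsmul_eq_mul]; ring
      _ ≤ ⟪u - u', ∑ x ∈ t, boolSign (y x) • ψ x⟫ := by rw [inner_sum]; exact sum_le_sum hpoint
      _ ≤ ‖u - u'‖ * ‖∑ x ∈ t, boolSign (y x) • ψ x‖ := real_inner_le_norm _ _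
      _ ≤ 2 * Λu * ‖∑ x ∈ t, boolSign (y x) • ψ x‖ := by
        gcongr
        linarith [norm_sub_le u u']
  linarith

theorem card_le_of_inner_shatters (hε : 0 < ε) (hψ : ∀ x ∈ t, ‖ψ x‖ ≤ Λψ)
    (H : ∀ y : X → Bool, ∃ u : E, ‖u‖ ≤ Λu ∧ ∀ x ∈ t, ε ≤ boolSign (y x) * (⟪u, ψ x⟫ - b x)) :
    (#t : ℝ) ≤ (Λu * Λψ / ε) ^ 2 := by
  obtain ⟨y, hy⟩ := exists_norm_sum_boolSign_smul_sq_le t ψ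
  set S := ∑ x ∈ t, boolSign (y x) • ψ x
  have hεS : ε * #t ≤ Λu * ‖S‖ := mul_card_le_mul_norm_sum_of_inner_shatters H y
  have hS : ‖S‖ ^ 2 ≤ #t * Λψ ^ 2 :=
    calc ‖S‖ ^ 2 ≤ ∑ x ∈ t, ‖ψ x‖ ^ 2 := hy
      _ ≤ ∑ _x ∈ t, Λψ ^ 2 := sum_le_sum fun x hx => by gcongr; exact hψ x hx
      _ = #t * Λψ ^ 2 := by rw [sum_const, nsmul_eq_mul]
  have hsq : #t * (#t * ε ^ 2) ≤ #t * (Λu ^ 2 * Λψ ^ 2) :=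
    calc #t * (#t * ε ^ 2) = (ε * #t) ^ 2 := by ring
      _ ≤ (Λu * ‖S‖) ^ 2 := pow_le_pow_left₀ (by positivity) hεS 2
      _ = Λu ^ 2 * ‖S‖ ^ 2 := by ring
      _ ≤ Λu ^ 2 * (#t * Λψ ^ 2) := by gcongr
      _ = #t * (Λu ^ 2 * Λψ ^ 2) := by ring
  rw [div_pow, mul_pow, le_div_iff₀ (by positivity)]
  rcases (Nat.cast_nonneg (α := ℝ) #t).eq_or_lt with ht | ht
  · rw [← ht, zero_mul]
    positivity
  · exact le_of_mul_le_mul_left hsq ht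

end Hilbert

lemma deltaVec_le_half_sub {Q : ℕ} (v : Fin Q → ℝ) {i j : Fin Q} (hji : j ≠ i) :
    deltaVec v i ≤ (v i - v j) / 2 := by
  have hj : j ∈ univ.erase i := mem_erase.mpr ⟨hji, mem_univ j⟩
  have hmax : v j ≤ maxOther v i := by
    rw [maxOther, dif_pos ⟨j, hj⟩]
    exact le_sup' v hj
  rw [deltaVec]
  linarith

lemma le_boolSign_mul_of_deltaVec {Q : ℕ} {v : Fin Q → ℝ} {i j : Fin Q} (hij : i ≠ j)
    {y : Bool} {β ε : ℝ}
    (h : (y = true → deltaVec v i - β ≥ ε) ∧ (y = false → deltaVec v j + β ≥ ε)) :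
    ε ≤ boolSign y * ((v i - v j) / 2 - β) := by
  have hi := deltaVec_le_half_sub v hij.symm
  have hj := deltaVec_le_half_sub v hij
  cases y
  · have := h.2 rfl
    simp only [boolSign]
    linarith
  · have := h.1 rfl
    simp only [boolSign]
    linarith

lemma sub_eq_boolSign_smul_sub {α M : Type*} [DecidableEq α] [AddCommGroup M] [Module ℝ M]
    (f : α → M) {i j k l : α} (h : s(i, j) = s(k, l)) :
    f i - f j = boolSign (decide (i = k)) • (f k - f l) := by
  rcases Sym2.eq_iff.mp h with ⟨rfl, rfl⟩ | ⟨rfl, rfl⟩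
  · simp [boolSign]
  · by_cases hji : j = i
    · subst hji
      simp
    · simp [Ne.symm hji, boolSign]

section MSVM

variable {X E : Type*} [NormedAddCommGroup E] [InnerProductSpace ℝ E] {Q : ℕ}

def msvmClass (Φ : X → E) (Λw : ℝ) : Set (X → Fin Q → ℝ) :=
  {h | ∃ w : Fin Q → E,
    (∀ k l : Fin Q, k < l → (1 / 2 : ℝ) * ‖w k - w l‖ ≤ Λw) ∧
    h = fun x k => inner ℝ (w k) (Φ x)}

variable {Φ : X → E} {ΛΦ Λw ε : ℝ}

theorem card_filter_sym2_eq_le_of_NShatters_msvmClass (hΦ : ∀ x, ‖Φ x‖ ≤ ΛΦ) (hε : 0 < ε)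
    {s : Finset X} {i₁ i₂ : X → Fin Q} {b : X → ℝ} (hne : ∀ x ∈ s, i₁ x ≠ i₂ x)
    (hy : ∀ y : X → Bool, ∃ f ∈ (fun h : X → Fin Q → ℝ => deltaVec ∘ h) '' msvmClass Φ Λw,
      ∀ x ∈ s, (y x = true → f x (i₁ x) - b x ≥ ε) ∧ (y x = false → f x (i₂ x) + b x ≥ ε))
    {k l : Fin Q} (hkl : k ≠ l) :
    (#{x ∈ s | s(i₁ x, i₂ x) = s(k, l)} : ℝ) ≤ (Λw * ΛΦ / ε) ^ 2 := by
  refine card_le_of_inner_shatters (ψ := fun x => boolSign (decide (i₁ x = k)) • Φ x) (b := b) hε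
    (fun x _ => (norm_boolSign_smul _ _).trans_le (hΦ x)) fun y => ?_
  obtain ⟨_, ⟨_, ⟨w, hw, rfl⟩, rfl⟩, hf⟩ := hy y
  refine ⟨(1 / 2 : ℝ) • (w k - w l), ?_, fun x hx => ?_⟩
  · rw [norm_smul, Real.norm_of_nonneg (by norm_num)]
    rcases hkl.lt_or_gt with h | h
    · exact hw k l h
    · rw [norm_sub_rev]
      exact hw l k h
  · rw [mem_filter] at hx
    convert le_boolSign_mul_of_deltaVec (hne x hx.1) (hf x hx.1) using 3
    rw [real_inner_smul_left, real_inner_smul_right, ← real_inner_smul_left,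
      ← sub_eq_boolSign_smul_sub w hx.2, inner_sub_left]
    ring

theorem card_le_of_NShatters_msvmClass (hΦ : ∀ x, ‖Φ x‖ ≤ ΛΦ) (hε : 0 < ε) {s : Finset X}
    (hs : NShatters ε ((fun h : X → Fin Q → ℝ => deltaVec ∘ h) '' msvmClass Φ Λw) s) :
    (#s : ℝ) ≤ Q.choose 2 * (Λw * ΛΦ / ε) ^ 2 := by
  classical
  obtain ⟨i₁, i₂, b, hne, hy⟩ := hs
  set pairs : Finset (Sym2 (Fin Q)) := (univ : Finset (Fin Q)).offDiag.image Sym2.mk.uncurry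
  have hmaps : ∀ x ∈ s, s(i₁ x, i₂ x) ∈ pairs := fun x hx =>
    mem_image.mpr ⟨(i₁ x, i₂ x), by simpa using hne x hx, rfl⟩
  have hfiber : ∀ p ∈ pairs, #{x ∈ s | s(i₁ x, i₂ x) = p} ≤ ⌊(Λw * ΛΦ / ε) ^ 2⌋₊ := by
    simp only [pairs, mem_image, mem_offDiag]
    rintro _ ⟨⟨k, l⟩, ⟨-, -, hkl⟩, rfl⟩
    exact Nat.le_floor (card_filter_sym2_eq_le_of_NShatters_msvmClass hΦ hε hne hy hkl)
  have hcard := card_le_mul_card_image_of_maps_to hmaps _ hfiber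
  rw [Sym2.card_image_offDiag, card_univ, Fintype.card_fin] at hcard
  calc (#s : ℝ) ≤ ⌊(Λw * ΛΦ / ε) ^ 2⌋₊ * Q.choose 2 := by exact_mod_cast hcard
    _ ≤ (Λw * ΛΦ / ε) ^ 2 * Q.choose 2 := by gcongr; exact Nat.floor_le (by positivity)
    _ = Q.choose 2 * (Λw * ΛΦ / ε) ^ 2 := mul_comm _ _

end MSVM

lemma NdimMargin_le_ofReal {X : Type*} {Q : ℕ} {γ R : ℝ} {F : Set (X → Fin Q → ℝ)}
    (h : ∀ s : Finset X, NShatters γ F s → (#s : ℝ) ≤ R) :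
    (NdimMargin γ F : ℝ≥0∞) ≤ ENNReal.ofReal R := by
  simp only [NdimMargin, ENat.toENNReal_iSup]
  refine iSup₂_le fun s hs => ?_
  rw [ENat.toENNReal_coe, ← ENNReal.ofReal_natCast]
  exact ENNReal.ofReal_le_ofReal (h s hs)

theorem margin_natarajan_dim_MSVM_general
    {X : Type*} {E : Type*} [NormedAddCommGroup E] [InnerProductSpace ℝ E]
    (Q : ℕ) (Φ : X → E) (ΛΦ Λw : ℝ)
    (hΦ : ∀ x : X, ‖Φ x‖ ≤ ΛΦ)
    (Hbar : Set (X → Fin Q → ℝ))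
    (hHbar : Hbar = {h | ∃ w : Fin Q → E,
      (∀ k l : Fin Q, k < l → (1 / 2 : ℝ) * ‖w k - w l‖ ≤ Λw) ∧
      h = fun x k => inner ℝ (w k) (Φ x)})
    (ε : ℝ) (hε : 0 < ε) :
    (NdimMargin ε ((fun h : X → Fin Q → ℝ => deltaVec ∘ h) '' Hbar) : ℝ≥0∞)
      ≤ ENNReal.ofReal ((Q.choose 2 : ℝ) * (Λw * ΛΦ / ε) ^ 2) := by
  subst hHbar
  exact NdimMargin_le_ofReal fun s hs => card_le_of_NShatters_msvmClass hΦ hε hs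

/-- bound on the Natarajan dimension with margin `ε` of `Δ H̄`, where
`H̄` is the class of functions implemented by a `Q`-category M-SVM with `b = 0`,
under the hypotheses `Φ(X) ⊆ B(0, Λ_Φ)` and `(1/2) max_{k < l} ‖w_k − w_l‖ ≤ Λ_w`. -/
theorem margin_natarajan_dim_MSVM
    {X : Type*} {E : Type*} [NormedAddCommGroup E] [InnerProductSpace ℝ E]
    (Q : ℕ) (hQ : 3 ≤ Q) (Φ : X → E) (ΛΦ Λw : ℝ)
    (hΦ : ∀ x : X, ‖Φ x‖ ≤ ΛΦ)
    (Hbar : Set (X → Fin Q → ℝ))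
    (hHbar : Hbar = {h | ∃ w : Fin Q → E,
      (∀ k l : Fin Q, k < l → (1 / 2 : ℝ) * ‖w k - w l‖ ≤ Λw) ∧
      h = fun x k => inner ℝ (w k) (Φ x)})
    (ε : ℝ) (hε : 0 < ε) :
    (NdimMargin ε ((fun h : X → Fin Q → ℝ => deltaVec ∘ h) '' Hbar) : ℝ≥0∞)
      ≤ ENNReal.ofReal ((Q.choose 2 : ℝ) * (Λw * ΛΦ / ε) ^ 2) :=
  margin_natarajan_dim_MSVM_general Q Φ ΛΦ Λw hΦ Hbar hHbar ε hε
end
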